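/- Let ρ : ℂⁿ → (0,∞) be 1-Lipschitz and bounded above by M. Suppose a, b, z ∈ ℂⁿ with |a − b| ≥ R·min(ρ(a), ρ(b)) for some R > 1, and |z − a| < δ·ρ(a) with 0 < δ < 1/2. Then |z − b| ≥ R̃·min(ρ(z), ρ(b)), where R̃ = (R − 1)/3. -/
import Mathlib


open Metric

theorem separation_propagation (n : ℕ) (ρ : EuclideanSpace ℂ (Fin n) → ℝ)
    (hρ_pos : ∀ z, 0 < ρ z)
    (hlip : ∀ z w : EuclideanSpace ℂ (Fin n), |ρ z - ρ w| ≤ dist z w)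
    (M : ℝ) (hM : ∀ z, ρ z ≤ M)
    (R δ : ℝ) (hR : 1 < R) (hδ0 : 0 < δ) (hδ : δ < 1 / 2)
    (a b z : EuclideanSpace ℂ (Fin n))
    (hsep : R * min (ρ a) (ρ b) ≤ dist a b)
    (hz : dist z a < δ * ρ a) :
    (R - 1) / 3 * min (ρ z) (ρ b) ≤ dist z b := by
  have h1 := abs_le.mp (hlip z a)
  have h2 := abs_le.mp (hlip z b)
  have htri : dist a b ≤ dist a z + dist z b := dist_triangle a z b
  rw [dist_comm a z] at htri
  have hpa := hρ_pos a
  have hpb := hρ_pos b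
  have hpz := hρ_pos z
  rcases le_total (ρ a) (ρ b) with h | h
  · rw [min_eq_left h] at hsep
    rcases le_total (ρ z) (ρ b) with h' | h'
    · rw [min_eq_left h']
      nlinarith
    · rw [min_eq_right h']
      nlinarith
  · rw [min_eq_right h] at hsep
    rcases le_total (ρ z) (ρ b) with h' | h'
    · rw [min_eq_left h']
      nlinarith
    · rw [min_eq_right h']
      nlinarith
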